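/- arXiv:2507.19816 — 2 statements merged into one kernel-verified Lean document; each statement's English description precedes it below -/
import Mathlib

section
/- The softmax update uniquely maximizes the error-exponent Lagrangian: let q be a positive probability vector on Fin M, let a : Fin M → ℝ satisfy a i > 0 for all i, and let λ ≥ 0. Define c i = Real.exp ((λ * Real.log (a i) + Real.log (q i)) / (λ + 1)) and p' i = c i / (∑ k, c k). Then for every probability vector p on Fin M (with terms where p i = 0 contributing 0 to all sums), −D(p‖q) + λ * ∑ i, p i * Real.log (a i / p i) ≤ −D(p'‖q) + λ * ∑ i, p' i * Real.log (a i / p' i), with equality if and only if p = p'. -/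
/-!
Writing `s i = (λ log aᵢ + log qᵢ) / (λ + 1)`, the Lagrangian at `p` equals
`(λ + 1) ∑ pᵢ (sᵢ - log pᵢ)`, and the Gibbs variational identity rewrites this as
`(λ + 1) (log ∑ exp sᵢ - D(p ‖ softmax s))`. Since `p'` is `softmax s`, the claim is Gibbs'
inequality `D(p ‖ p') ≥ 0`, with equality only at `p = p'`.
-/

open Finset Real InformationTheory

variable {ι : Type*} [Fintype ι]

lemma mul_log_div_add_sub_eq_mul_klFun {x y : ℝ} (hy : y ≠ 0) :
    x * log (x / y) + (y - x) = y * klFun (x / y) := by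
  rw [klFun_apply]
  field_simp
  ring

section Gibbs

variable {p q : ι → ℝ}

lemma sum_mul_log_div_eq_sum_mul_klFun (hq : ∀ i, q i ≠ 0) (hpq : ∑ i, p i = ∑ i, q i) :
    ∑ i, p i * log (p i / q i) = ∑ i, q i * klFun (p i / q i) := by
  have hsub : ∑ i, (q i - p i) = 0 := by rw [sum_sub_distrib, hpq, sub_self]
  rw [← add_zero (∑ i, _), ← hsub, ← sum_add_distrib]
  exact sum_congr rfl fun i _ ↦ mul_log_div_add_sub_eq_mul_klFun (hq i)

theorem sum_mul_log_div_nonneg (hp : ∀ i, 0 ≤ p i) (hq : ∀ i, 0 < q i)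
    (hpq : ∑ i, p i = ∑ i, q i) : 0 ≤ ∑ i, p i * log (p i / q i) := by
  rw [sum_mul_log_div_eq_sum_mul_klFun (fun i ↦ (hq i).ne') hpq]
  exact sum_nonneg fun i _ ↦ mul_nonneg (hq i).le (klFun_nonneg (div_nonneg (hp i) (hq i).le))

theorem sum_mul_log_div_eq_zero_iff (hp : ∀ i, 0 ≤ p i) (hq : ∀ i, 0 < q i)
    (hpq : ∑ i, p i = ∑ i, q i) : ∑ i, p i * log (p i / q i) = 0 ↔ p = q := by
  have hterm : ∀ i, q i * klFun (p i / q i) = 0 ↔ p i = q i := fun i ↦ by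
    rw [mul_eq_zero_iff_left (hq i).ne', klFun_eq_zero_iff (div_nonneg (hp i) (hq i).le),
      div_eq_one_iff_eq (hq i).ne']
  rw [sum_mul_log_div_eq_sum_mul_klFun (fun i ↦ (hq i).ne') hpq,
    sum_eq_zero_iff_of_nonneg fun i _ ↦
      mul_nonneg (hq i).le (klFun_nonneg (div_nonneg (hp i) (hq i).le)), funext_iff]
  simp only [mem_univ, true_implies, hterm]

end Gibbs

noncomputable def softmax (s : ι → ℝ) (i : ι) : ℝ := exp (s i) / ∑ k, exp (s k)

section Softmax

variable (s : ι → ℝ)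

lemma sum_exp_pos [Nonempty ι] : 0 < ∑ k, exp (s k) :=
  sum_pos (fun k _ ↦ exp_pos (s k)) univ_nonempty

lemma softmax_pos (i : ι) : 0 < softmax s i :=
  have : Nonempty ι := ⟨i⟩
  div_pos (exp_pos (s i)) (sum_exp_pos s)

lemma sum_softmax [Nonempty ι] : ∑ i, softmax s i = 1 := by
  simp only [softmax, ← sum_div, div_self (sum_exp_pos s).ne']

lemma log_softmax (i : ι) : log (softmax s i) = s i - log (∑ k, exp (s k)) := by
  have : Nonempty ι := ⟨i⟩
  rw [softmax, log_div (exp_pos (s i)).ne' (sum_exp_pos s).ne', log_exp]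

theorem sum_mul_log_div_softmax {p : ι → ℝ} (hp1 : ∑ i, p i = 1) :
    ∑ i, p i * log (p i / softmax s i) =
      log (∑ k, exp (s k)) - ∑ i, p i * (s i - log (p i)) := by
  have hterm : ∀ i, p i * log (p i / softmax s i) =
      p i * log (∑ k, exp (s k)) - p i * (s i - log (p i)) := fun i ↦ by
    rcases eq_or_ne (p i) 0 with h | h
    · simp [h]
    · rw [log_div h (softmax_pos s i).ne', log_softmax]
      ring
  rw [sum_congr rfl fun i _ ↦ hterm i, sum_sub_distrib, ← sum_mul, hp1, one_mul]

end Softmax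

lemma neg_sum_mul_log_div_add_mul_sum_mul_log_div {p q a : ι → ℝ} {lam : ℝ}
    (hq : ∀ i, q i ≠ 0) (ha : ∀ i, a i ≠ 0) (hlam : lam + 1 ≠ 0) :
    -(∑ i, p i * log (p i / q i)) + lam * ∑ i, p i * log (a i / p i) =
      (lam + 1) * ∑ i, p i * ((lam * log (a i) + log (q i)) / (lam + 1) - log (p i)) := by
  rw [← sum_neg_distrib, mul_sum, mul_sum, ← sum_add_distrib]
  refine sum_congr rfl fun i _ ↦ ?_
  rcases eq_or_ne (p i) 0 with h | h
  · simp [h]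
  · rw [log_div h (hq i), log_div (ha i) h]
    field_simp
    ring

theorem softmax_unique_maximizer_error_exponent_general (M : ℕ)
    (q : Fin M → ℝ) (hq : ∀ i, 0 < q i)
    (a : Fin M → ℝ) (ha : ∀ i, 0 < a i)
    (lam : ℝ) (hlam : 0 ≤ lam)
    (c p' : Fin M → ℝ)
    (hc : ∀ i, c i = Real.exp ((lam * Real.log (a i) + Real.log (q i)) / (lam + 1)))
    (hp' : ∀ i, p' i = c i / ∑ k, c k) :
    ∀ p : Fin M → ℝ, (∀ i, 0 ≤ p i) → (∑ i, p i = 1) →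
      (-(∑ i, p i * Real.log (p i / q i)) + lam * ∑ i, p i * Real.log (a i / p i) ≤
        -(∑ i, p' i * Real.log (p' i / q i)) + lam * ∑ i, p' i * Real.log (a i / p' i)) ∧
      (-(∑ i, p i * Real.log (p i / q i)) + lam * ∑ i, p i * Real.log (a i / p i) =
        -(∑ i, p' i * Real.log (p' i / q i)) + lam * ∑ i, p' i * Real.log (a i / p' i) ↔
        p = p') := by
  intro p hp hp1
  set s : Fin M → ℝ := fun i ↦ (lam * log (a i) + log (q i)) / (lam + 1)
  have : Nonempty (Fin M) := by
    by_contra h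
    simp [not_nonempty_iff.mp h] at hp1
  obtain rfl : p' = softmax s := funext fun i ↦ by simp only [hp', hc, softmax, s]
  have hlam1 : 0 < lam + 1 := by linarith
  have hsum : ∑ i, p i = ∑ i, softmax s i := by rw [hp1, sum_softmax]
  have hL : ∀ r : Fin M → ℝ, ∑ i, r i = 1 →
      -(∑ i, r i * log (r i / q i)) + lam * ∑ i, r i * log (a i / r i) =
        (lam + 1) * (log (∑ k, exp (s k)) - ∑ i, r i * log (r i / softmax s i)) := fun r hr ↦ by
    rw [neg_sum_mul_log_div_add_mul_sum_mul_log_div (fun i ↦ (hq i).ne') (fun i ↦ (ha i).ne')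
      hlam1.ne', sum_mul_log_div_softmax s hr, sub_sub_cancel]
  have hkl := sum_mul_log_div_eq_zero_iff hp (softmax_pos s) hsum
  have hself := (sum_mul_log_div_eq_zero_iff (fun i ↦ (softmax_pos s i).le) (softmax_pos s)
    rfl).mpr rfl
  rw [hL p hp1, hL _ (sum_softmax s), hself, sub_zero, mul_le_mul_iff_right₀ hlam1,
    mul_right_inj' hlam1.ne', sub_eq_self, hkl]
  exact ⟨sub_le_self _ (sum_mul_log_div_nonneg hp (softmax_pos s) hsum), Iff.rfl⟩

/-- The softmax update uniquely maximizes the error-exponent Lagrangian: with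
`c i = exp((λ log (a i) + log (q i)) / (λ+1))` and `p' i = c i / ∑ k, c k`, for every
probability vector `p` the Lagrangian value at `p` is at most its value at `p'`, with
equality if and only if `p = p'`. -/
theorem softmax_unique_maximizer_error_exponent (M : ℕ) (hM : 1 ≤ M)
    (q : Fin M → ℝ) (hq : ∀ i, 0 < q i) (hq1 : ∑ i, q i = 1)
    (a : Fin M → ℝ) (ha : ∀ i, 0 < a i)
    (lam : ℝ) (hlam : 0 ≤ lam)
    (c p' : Fin M → ℝ)
    (hc : ∀ i, c i = Real.exp ((lam * Real.log (a i) + Real.log (q i)) / (lam + 1)))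
    (hp' : ∀ i, p' i = c i / ∑ k, c k) :
    ∀ p : Fin M → ℝ, (∀ i, 0 ≤ p i) → (∑ i, p i = 1) →
      (-(∑ i, p i * Real.log (p i / q i)) + lam * ∑ i, p i * Real.log (a i / p i) ≤
        -(∑ i, p' i * Real.log (p' i / q i)) + lam * ∑ i, p' i * Real.log (a i / p' i)) ∧
      (-(∑ i, p i * Real.log (p i / q i)) + lam * ∑ i, p i * Real.log (a i / p i) =
        -(∑ i, p' i * Real.log (p' i / q i)) + lam * ∑ i, p' i * Real.log (a i / p' i) ↔
        p = p') :=
  softmax_unique_maximizer_error_exponent_general M q hq a ha lam hlam c p' hc hp'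
end

section
/- Per-iteration descent for the AM-CD algorithm for Marton's error exponent (core estimate in Theorem 1): let q be a positive probability vector on Fin M, ζ, Δ, R ∈ ℝ, λ ≥ 0. Let p_old and p be positive probability vectors on Fin M, let r_old be a positive BA fixed point for p_old with associated dual variable a_old and posterior v_old, and let r be a positive BA fixed point for p with associated dual variable a and posterior v. Define c i = Real.exp ((λ * Real.log (a i) + Real.log (q i)) / (λ + 1)) and p' i = c i / (∑ k, c k). Assume the constraint is tight at both steps: −ζ * Δ + ∑ i, p i * Real.log (a_old i / p i) = R and −ζ * Δ + ∑ i, p' i * Real.log (a i / p' i) = R. Then −D(p'‖q) − (−D(p‖q)) = (λ + 1) * D(p‖p') + λ * ∑ j, r j * (∑ i, v i j * Real.log (v i j / v_old i j)), and consequently −D(p'‖q) − (−D(p‖q)) ≥ D(p‖p') ≥ (1/2) * (∑ i, |p i − p' i|)^2. -/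
open Real Finset


-- Gibbs inequality
lemma gibbs_aux {ι : Type*} (s : Finset ι) (x y : ι → ℝ)
    (hx : ∀ i ∈ s, 0 < x i) (hy : ∀ i ∈ s, 0 < y i)
    (hs : ∑ i ∈ s, y i ≤ ∑ i ∈ s, x i) :
    0 ≤ ∑ i ∈ s, x i * Real.log (x i / y i) := by
  have key : ∀ i ∈ s, x i - y i ≤ x i * Real.log (x i / y i) := by
    intro i hi
    have hxi := hx i hi; have hyi := hy i hi
    have h1 : 1 - (x i / y i)⁻¹ ≤ Real.log (x i / y i) :=
      Real.one_sub_inv_le_log_of_pos (div_pos hxi hyi)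
    have h2 : (x i / y i)⁻¹ = y i / x i := by
      rw [inv_div]
    rw [h2] at h1
    have := mul_le_mul_of_nonneg_left h1 hxi.le
    calc x i - y i = x i * (1 - y i / x i) := by field_simp
    _ ≤ x i * Real.log (x i / y i) := this
  have := Finset.sum_le_sum key
  rw [Finset.sum_sub_distrib] at this
  linarith

-- monotonicity helper H
lemma H_sign : ∀ t : ℝ, 0 < t →
    ((1 ≤ t → 0 ≤ (t+1) * Real.log t - 2*(t-1)) ∧ (t ≤ 1 → (t+1) * Real.log t - 2*(t-1) ≤ 0)) := by
  have hmono : MonotoneOn (fun t : ℝ => (t+1) * Real.log t - 2*(t-1)) (Set.Ioi 0) := by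
    have hderiv : ∀ t ∈ Set.Ioi (0:ℝ), HasDerivAt (fun t : ℝ => (t+1) * Real.log t - 2*(t-1))
        (Real.log t + (t+1)/t - 2) t := by
      intro t ht
      have h1 : HasDerivAt (fun t : ℝ => (t+1) * Real.log t) (1 * Real.log t + (t+1) * t⁻¹) t :=
        ((hasDerivAt_id t).add_const 1).mul (Real.hasDerivAt_log (ne_of_gt ht))
      have h2 : HasDerivAt (fun t : ℝ => 2*(t-1)) 2 t := by
        simpa using ((hasDerivAt_id t).sub_const 1).const_mul 2
      refine (h1.sub h2).congr_deriv ?_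
      ring
    apply monotoneOn_of_deriv_nonneg (convex_Ioi 0)
    · exact ContinuousOn.sub (ContinuousOn.mul (by fun_prop)
        (Real.continuousOn_log.mono (by intro x hx; exact ne_of_gt hx))) (by fun_prop)
    · intro t ht
      rw [interior_Ioi] at ht
      exact (hderiv t ht).differentiableAt.differentiableWithinAt
    · intro t ht
      rw [interior_Ioi] at ht
      rw [(hderiv t ht).deriv]
      have := Real.one_sub_inv_le_log_of_pos ht
      have ht' : (t:ℝ) ≠ 0 := ne_of_gt ht
      have : 0 ≤ Real.log t + 1/t - 1 := by
        rw [one_div]; linarith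
      have he : (t+1)/t = 1 + 1/t := by field_simp
      rw [he]; linarith
  intro t ht
  have h1 : (fun t : ℝ => (t+1) * Real.log t - 2*(t-1)) 1 = 0 := by simp
  constructor
  · intro h
    have := hmono (Set.mem_Ioi.2 one_pos) (Set.mem_Ioi.2 ht) h
    rw [h1] at this; exact this
  · intro h
    have := hmono (Set.mem_Ioi.2 ht) (Set.mem_Ioi.2 one_pos) h
    rw [h1] at this; exact this

-- G nonneg
lemma G_nonneg : ∀ t : ℝ, 0 < t → 3*(t-1)^2 ≤ 2*(t+2)*(t*Real.log t - t + 1) := by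
  have hderiv : ∀ t ∈ Set.Ioi (0:ℝ),
      HasDerivAt (fun t : ℝ => 2*(t+2)*(t*Real.log t - t + 1) - 3*(t-1)^2)
      (4*((t+1) * Real.log t - 2*(t-1))) t := by
    intro t ht
    have hlog : HasDerivAt (fun t : ℝ => t * Real.log t) (Real.log t + 1) t := by
      have := (hasDerivAt_id t).mul (Real.hasDerivAt_log (ne_of_gt ht))
      refine this.congr_deriv ?_
      simp [mul_inv_cancel₀ (ne_of_gt (Set.mem_Ioi.1 ht))]
    have h1 : HasDerivAt (fun t : ℝ => 2*(t+2)) 2 t := by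
      simpa using ((hasDerivAt_id t).add_const 2).const_mul 2
    have h2 : HasDerivAt (fun t : ℝ => t*Real.log t - t + 1) (Real.log t + 1 - 1) t :=
      (hlog.sub (hasDerivAt_id t)).add_const 1
    have h3 : HasDerivAt (fun t : ℝ => 3*(t-1)^2) (3*(2*(t-1))) t := by
      simpa using (((hasDerivAt_id t).sub_const 1).pow 2).const_mul 3
    have := (h1.mul h2).sub h3
    refine this.congr_deriv ?_
    ring
  have hcont : ContinuousOn (fun t : ℝ => 2*(t+2)*(t*Real.log t - t + 1) - 3*(t-1)^2)
      (Set.Ioi (0:ℝ)) := by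
    apply ContinuousOn.sub _ (by fun_prop)
    apply ContinuousOn.mul (by fun_prop)
    apply ContinuousOn.add (ContinuousOn.sub (ContinuousOn.mul (by fun_prop)
      (Real.continuousOn_log.mono (by intro x hx; exact ne_of_gt hx))) (by fun_prop)) (by fun_prop)
  have G1 : (fun t : ℝ => 2*(t+2)*(t*Real.log t - t + 1) - 3*(t-1)^2) 1 = 0 := by
    simp
  intro t ht
  have key : 0 ≤ 2*(t+2)*(t*Real.log t - t + 1) - 3*(t-1)^2 := by
    rcases le_total 1 t with h | h
    · have hmono : MonotoneOn (fun t : ℝ => 2*(t+2)*(t*Real.log t - t + 1) - 3*(t-1)^2)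
          (Set.Ici 1) := by
        apply monotoneOn_of_deriv_nonneg (convex_Ici 1)
        · exact hcont.mono (fun x hx => Set.mem_Ioi.2 (lt_of_lt_of_le one_pos hx))
        · intro s hs
          rw [interior_Ici] at hs
          exact (hderiv s (Set.mem_Ioi.2 (lt_trans one_pos hs))).differentiableAt.differentiableWithinAt
        · intro s hs
          rw [interior_Ici] at hs
          rw [(hderiv s (Set.mem_Ioi.2 (lt_trans one_pos hs))).deriv]
          have := (H_sign s (lt_trans one_pos hs)).1 hs.le
          linarith
      have := hmono (Set.mem_Ici.2 le_rfl) (Set.mem_Ici.2 h) h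
      rw [G1] at this; exact this
    · have hanti : AntitoneOn (fun t : ℝ => 2*(t+2)*(t*Real.log t - t + 1) - 3*(t-1)^2)
          (Set.Ioc 0 1) := by
        apply antitoneOn_of_deriv_nonpos (convex_Ioc 0 1)
        · exact hcont.mono (fun x hx => hx.1)
        · intro s hs
          rw [interior_Ioc] at hs
          exact (hderiv s hs.1).differentiableAt.differentiableWithinAt
        · intro s hs
          rw [interior_Ioc] at hs
          rw [(hderiv s hs.1).deriv]
          have := (H_sign s hs.1).2 hs.2.le
          linarith
      have := hanti (Set.mem_Ioc.2 ⟨ht, h⟩) (Set.mem_Ioc.2 ⟨one_pos, le_rfl⟩) h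
      rw [G1] at this; exact this
  linarith

-- pointwise KL bound
lemma kl_ptwise {x y : ℝ} (hx : 0 < x) (hy : 0 < y) :
    3*(x-y)^2 / (2*(x+2*y)) ≤ x * Real.log (x/y) - x + y := by
  have ht : 0 < x / y := div_pos hx hy
  have key := G_nonneg (x/y) ht
  have e1 : 3*(x-y)^2 = y^2 * (3*(x/y - 1)^2) := by field_simp
  have e2 : 2*(x+2*y)*(x * Real.log (x/y) - x + y)
      = y^2 * (2*(x/y+2)*((x/y)*Real.log (x/y) - (x/y) + 1)) := by
    field_simp
  have h3 : 3*(x-y)^2 ≤ 2*(x+2*y)*(x * Real.log (x/y) - x + y) := by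
    rw [e1, e2]
    exact mul_le_mul_of_nonneg_left key (sq_nonneg y)
  have hpos : 0 < 2*(x+2*y) := by linarith
  rw [div_le_iff₀ hpos]
  linarith [h3]


lemma pinsker_aux {M : ℕ} (p p' : Fin M → ℝ) (hp : ∀ i, 0 < p i) (hp' : ∀ i, 0 < p' i)
    (hp1 : ∑ i, p i = 1) (hp'1 : ∑ i, p' i = 1) :
    (1/2) * (∑ i, |p i - p' i|)^2 ≤ ∑ i, p i * Real.log (p i / p' i) := by
  have hsum : ∑ i, (p i * Real.log (p i / p' i) - p i + p' i)
      = ∑ i, p i * Real.log (p i / p' i) := by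
    rw [Finset.sum_add_distrib, Finset.sum_sub_distrib, hp1, hp'1]; ring
  have step1 : ∑ i, 3*(p i - p' i)^2 / (2*(p i + 2*p' i))
      ≤ ∑ i, (p i * Real.log (p i / p' i) - p i + p' i) :=
    Finset.sum_le_sum (fun i _ => kl_ptwise (hp i) (hp' i))
  have hgpos : ∀ i ∈ (Finset.univ : Finset (Fin M)), 0 < (2/3 : ℝ)*(p i + 2*p' i) := by
    intro i _
    have := hp i; have := hp' i
    nlinarith
  have cs := Finset.sq_sum_div_le_sum_sq_div Finset.univ (fun i => |p i - p' i|) hgpos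
  have hg : ∑ i, (2/3 : ℝ)*(p i + 2*p' i) = 2 := by
    rw [← Finset.mul_sum, Finset.sum_add_distrib, hp1, ← Finset.mul_sum, hp'1]
    norm_num
  rw [hg] at cs
  have heach : ∑ i, |p i - p' i|^2 / ((2/3 : ℝ)*(p i + 2*p' i))
      = ∑ i, 3*(p i - p' i)^2 / (2*(p i + 2*p' i)) := by
    apply Finset.sum_congr rfl
    intro i _
    have h : (0:ℝ) < p i + 2*p' i := by have := hp i; have := hp' i; nlinarith
    rw [sq_abs]
    rw [div_eq_div_iff (by linarith) (by linarith)]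
    ring
  rw [heach] at cs
  have : (1/2 : ℝ) * (∑ i, |p i - p' i|)^2 = (∑ i, |p i - p' i|)^2 / 2 := by ring
  rw [this]
  calc (∑ i, |p i - p' i|)^2 / 2 ≤ ∑ i, 3*(p i - p' i)^2 / (2*(p i + 2*p' i)) := cs
  _ ≤ ∑ i, (p i * Real.log (p i / p' i) - p i + p' i) := step1
  _ = ∑ i, p i * Real.log (p i / p' i) := hsum

lemma algebra_step (lam A Aq Aa B Bq Pl Apl Aaold L : ℝ) (hl : 0 ≤ lam)
    (hApl : Apl = (lam*Aa + Aq)/(lam+1) - L)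
    (hPl : Pl = (lam*B + Bq)/(lam+1) - L)
    (hAaold : Aaold - A = B - Pl) :
    -(Pl - Bq) - -(A - Aq) = (lam+1)*(A - Apl) + lam*(Aa - Aaold) := by
  have h1 : lam + 1 ≠ 0 := by positivity
  have h2 : Aaold = A + B - Pl := by linarith
  subst hApl hPl h2
  field_simp
  ring


set_option maxHeartbeats 1000000 in
/-- Per-iteration descent estimate for the AM-CD algorithm for Marton's error
exponent (core estimate in Theorem 1): under tightness of the rate constraint at consecutive
steps, the increase of the objective `−D(·‖q)` from `p` to the softmax update `p'` equals
`(λ+1) D(p‖p') + λ ∑_j r j ∑_i v i j log (v i j / v_old i j)`, and is at least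
`D(p‖p') ≥ (1/2) (∑ |p i − p' i|)²`. -/
theorem amcd_descent_error_exponent (M N : ℕ) (hM : 1 ≤ M) (hN : 1 ≤ N)
    (d : Fin M → Fin N → ℝ) (hd : ∀ i j, 0 ≤ d i j)
    (q : Fin M → ℝ) (hq : ∀ i, 0 < q i) (hq1 : ∑ i, q i = 1)
    (ζ Δ R : ℝ) (lam : ℝ) (hlam : 0 ≤ lam)
    (pold p : Fin M → ℝ)
    (hpold : ∀ i, 0 < pold i) (hpold1 : ∑ i, pold i = 1)
    (hp : ∀ i, 0 < p i) (hp1 : ∑ i, p i = 1)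
    (rold : Fin N → ℝ) (hrold : ∀ j, 0 < rold j) (hrold1 : ∑ j, rold j = 1)
    (hroldfix : ∀ j, rold j =
      ∑ i, pold i * Real.exp (-ζ * d i j) * rold j / (∑ k, Real.exp (-ζ * d i k) * rold k))
    (aold : Fin M → ℝ)
    (haold : ∀ i, aold i = pold i / (∑ j, Real.exp (-ζ * d i j) * rold j))
    (vold : Fin M → Fin N → ℝ)
    (hvold : ∀ i j, vold i j =
      pold i * (Real.exp (-ζ * d i j) * rold j / (∑ k, Real.exp (-ζ * d i k) * rold k)) / rold j)
    (r : Fin N → ℝ) (hr : ∀ j, 0 < r j) (hr1 : ∑ j, r j = 1)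
    (hrfix : ∀ j, r j =
      ∑ i, p i * Real.exp (-ζ * d i j) * r j / (∑ k, Real.exp (-ζ * d i k) * r k))
    (a : Fin M → ℝ) (ha : ∀ i, a i = p i / (∑ j, Real.exp (-ζ * d i j) * r j))
    (v : Fin M → Fin N → ℝ)
    (hv : ∀ i j, v i j =
      p i * (Real.exp (-ζ * d i j) * r j / (∑ k, Real.exp (-ζ * d i k) * r k)) / r j)
    (c p' : Fin M → ℝ)
    (hc : ∀ i, c i = Real.exp ((lam * Real.log (a i) + Real.log (q i)) / (lam + 1)))
    (hp' : ∀ i, p' i = c i / ∑ k, c k)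
    (htight_old : -ζ * Δ + ∑ i, p i * Real.log (aold i / p i) = R)
    (htight_new : -ζ * Δ + ∑ i, p' i * Real.log (a i / p' i) = R) :
    (-(∑ i, p' i * Real.log (p' i / q i)) - (-(∑ i, p i * Real.log (p i / q i))) =
        (lam + 1) * (∑ i, p i * Real.log (p i / p' i)) +
          lam * ∑ j, r j * ∑ i, v i j * Real.log (v i j / vold i j)) ∧
    (∑ i, p i * Real.log (p i / p' i) ≤
        -(∑ i, p' i * Real.log (p' i / q i)) - (-(∑ i, p i * Real.log (p i / q i)))) ∧
    ((1 / 2) * (∑ i, |p i - p' i|) ^ 2 ≤ ∑ i, p i * Real.log (p i / p' i)) := by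
  haveI : Nonempty (Fin M) := ⟨⟨0, hM⟩⟩
  haveI : Nonempty (Fin N) := ⟨⟨0, hN⟩⟩
  have hS : ∀ i, 0 < ∑ k, Real.exp (-ζ * d i k) * r k := fun i =>
    Finset.sum_pos (fun k _ => mul_pos (Real.exp_pos _) (hr k)) Finset.univ_nonempty
  have hSold : ∀ i, 0 < ∑ k, Real.exp (-ζ * d i k) * rold k := fun i =>
    Finset.sum_pos (fun k _ => mul_pos (Real.exp_pos _) (hrold k)) Finset.univ_nonempty
  have hapos : ∀ i, 0 < a i := fun i => by rw [ha]; exact div_pos (hp i) (hS i)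
  have haoldpos : ∀ i, 0 < aold i := fun i => by rw [haold]; exact div_pos (hpold i) (hSold i)
  have hcpos : ∀ i, 0 < c i := fun i => by rw [hc]; exact Real.exp_pos _
  have hC : 0 < ∑ k, c k := Finset.sum_pos (fun k _ => hcpos k) Finset.univ_nonempty
  have hp'pos : ∀ i, 0 < p' i := fun i => by rw [hp']; exact div_pos (hcpos i) hC
  have hp'1 : ∑ i, p' i = 1 := by
    calc ∑ i, p' i = (∑ i, c i) / (∑ k, c k) := by
          rw [Finset.sum_div]; exact Finset.sum_congr rfl (fun i _ => hp' i)
    _ = 1 := div_self hC.ne'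
  have hlogp' : ∀ i, Real.log (p' i)
      = (lam * Real.log (a i) + Real.log (q i))/(lam+1) - Real.log (∑ k, c k) := by
    intro i; rw [hp' i, Real.log_div (hcpos i).ne' hC.ne', hc i, Real.log_exp]
  -- weighted-log-sum formulas
  have hApl : ∑ i, p i * Real.log (p' i)
      = (lam * (∑ i, p i * Real.log (a i)) + ∑ i, p i * Real.log (q i))/(lam+1)
        - Real.log (∑ k, c k) := by
    calc ∑ i, p i * Real.log (p' i)
        = ∑ i, ((lam * (p i * Real.log (a i)) + p i * Real.log (q i))/(lam+1)
            - p i * Real.log (∑ k, c k)) := by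
          apply Finset.sum_congr rfl; intro i _; rw [hlogp' i]; ring
    _ = _ := by
          rw [Finset.sum_sub_distrib, ← Finset.sum_div, Finset.sum_add_distrib,
            ← Finset.mul_sum, ← Finset.sum_mul, hp1, one_mul]
  have hPl : ∑ i, p' i * Real.log (p' i)
      = (lam * (∑ i, p' i * Real.log (a i)) + ∑ i, p' i * Real.log (q i))/(lam+1)
        - Real.log (∑ k, c k) := by
    calc ∑ i, p' i * Real.log (p' i)
        = ∑ i, ((lam * (p' i * Real.log (a i)) + p' i * Real.log (q i))/(lam+1)
            - p' i * Real.log (∑ k, c k)) := by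
          apply Finset.sum_congr rfl; intro i _; rw [hlogp' i]; ring
    _ = _ := by
          rw [Finset.sum_sub_distrib, ← Finset.sum_div, Finset.sum_add_distrib,
            ← Finset.mul_sum, ← Finset.sum_mul, hp'1, one_mul]
  -- tightness
  have htA : (∑ i, p i * Real.log (aold i)) - (∑ i, p i * Real.log (p i))
      = (∑ i, p' i * Real.log (a i)) - (∑ i, p' i * Real.log (p' i)) := by
    have e1 : ∑ i, p i * Real.log (aold i / p i)
        = (∑ i, p i * Real.log (aold i)) - (∑ i, p i * Real.log (p i)) := by
      rw [← Finset.sum_sub_distrib]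
      apply Finset.sum_congr rfl; intro i _
      rw [Real.log_div (haoldpos i).ne' (hp i).ne']; ring
    have e2 : ∑ i, p' i * Real.log (a i / p' i)
        = (∑ i, p' i * Real.log (a i)) - (∑ i, p' i * Real.log (p' i)) := by
      rw [← Finset.sum_sub_distrib]
      apply Finset.sum_congr rfl; intro i _
      rw [Real.log_div (hapos i).ne' (hp'pos i).ne']; ring
    linarith
  -- explicit forms of v, vold
  have hv' : ∀ i j, v i j = a i * Real.exp (-ζ * d i j) := by
    intro i j
    have h1 := (hr j).ne'
    have h2 := (hS i).ne'
    rw [hv i j, ha i]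
    field_simp
  have hvold' : ∀ i j, vold i j = aold i * Real.exp (-ζ * d i j) := by
    intro i j
    have h1 := (hrold j).ne'
    have h2 := (hSold i).ne'
    rw [hvold i j, haold i]
    field_simp
  have hvpos : ∀ i j, 0 < v i j := fun i j => by
    rw [hv']; exact mul_pos (hapos i) (Real.exp_pos _)
  have hvoldpos : ∀ i j, 0 < vold i j := fun i j => by
    rw [hvold']; exact mul_pos (haoldpos i) (Real.exp_pos _)
  have hlograt : ∀ i j, Real.log (v i j / vold i j) = Real.log (a i / aold i) := by
    intro i j
    rw [hv' i j, hvold' i j, mul_div_mul_right _ _ (Real.exp_ne_zero _)]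
  -- the channel-divergence term
  have hT : ∑ j, r j * ∑ i, v i j * Real.log (v i j / vold i j)
      = (∑ i, p i * Real.log (a i)) - (∑ i, p i * Real.log (aold i)) := by
    have e : ∀ j, r j * ∑ i, v i j * Real.log (v i j / vold i j)
        = ∑ i, (a i * Real.log (a i / aold i)) * (Real.exp (-ζ * d i j) * r j) := by
      intro j
      rw [Finset.mul_sum]
      apply Finset.sum_congr rfl; intro i _
      rw [hlograt i j, hv' i j]; ring
    calc ∑ j, r j * ∑ i, v i j * Real.log (v i j / vold i j)
        = ∑ j, ∑ i, (a i * Real.log (a i / aold i)) * (Real.exp (-ζ * d i j) * r j) :=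
          Finset.sum_congr rfl (fun j _ => e j)
    _ = ∑ i, ∑ j, (a i * Real.log (a i / aold i)) * (Real.exp (-ζ * d i j) * r j) :=
          Finset.sum_comm
    _ = ∑ i, (a i * Real.log (a i / aold i)) * (∑ j, Real.exp (-ζ * d i j) * r j) := by
          apply Finset.sum_congr rfl; intro i _; rw [Finset.mul_sum]
    _ = ∑ i, p i * Real.log (a i / aold i) := by
          apply Finset.sum_congr rfl; intro i _
          rw [ha i]
          field_simp
          rw [mul_assoc, mul_div_assoc, mul_div_cancel_left₀ _ (ne_of_gt (Finset.sum_pos (fun k _ => mul_pos (Real.exp_pos _) (hr k)) Finset.univ_nonempty))]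
    _ = (∑ i, p i * Real.log (a i)) - (∑ i, p i * Real.log (aold i)) := by
          rw [← Finset.sum_sub_distrib]
          apply Finset.sum_congr rfl; intro i _
          rw [Real.log_div (hapos i).ne' (haoldpos i).ne']; ring
  -- rewrite sums of log ratios
  have eL1 : ∑ i, p' i * Real.log (p' i / q i)
      = (∑ i, p' i * Real.log (p' i)) - (∑ i, p' i * Real.log (q i)) := by
    rw [← Finset.sum_sub_distrib]
    apply Finset.sum_congr rfl; intro i _
    rw [Real.log_div (hp'pos i).ne' (hq i).ne']; ring
  have eL2 : ∑ i, p i * Real.log (p i / q i)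
      = (∑ i, p i * Real.log (p i)) - (∑ i, p i * Real.log (q i)) := by
    rw [← Finset.sum_sub_distrib]
    apply Finset.sum_congr rfl; intro i _
    rw [Real.log_div (hp i).ne' (hq i).ne']; ring
  have eD : ∑ i, p i * Real.log (p i / p' i)
      = (∑ i, p i * Real.log (p i)) - (∑ i, p i * Real.log (p' i)) := by
    rw [← Finset.sum_sub_distrib]
    apply Finset.sum_congr rfl; intro i _
    rw [Real.log_div (hp i).ne' (hp'pos i).ne']; ring
  -- Part 1
  have part1 : -(∑ i, p' i * Real.log (p' i / q i)) - (-(∑ i, p i * Real.log (p i / q i))) =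
      (lam + 1) * (∑ i, p i * Real.log (p i / p' i)) +
        lam * ∑ j, r j * ∑ i, v i j * Real.log (v i j / vold i j) := by
    rw [eL1, eL2, eD, hT]
    exact algebra_step lam _ _ _ _ _ _ _ _ _ hlam hApl hPl (by linarith [htA])
  -- nonnegativity
  have hD0 : 0 ≤ ∑ i, p i * Real.log (p i / p' i) :=
    gibbs_aux Finset.univ p p' (fun i _ => hp i) (fun i _ => hp'pos i) (by rw [hp1, hp'1])
  have hvsum : ∀ j, ∑ i, v i j = 1 := by
    intro j
    have e : ∑ i, v i j
        = (∑ i, p i * Real.exp (-ζ * d i j) * r j / (∑ k, Real.exp (-ζ * d i k) * r k)) / r j := by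
      rw [Finset.sum_div]
      apply Finset.sum_congr rfl; intro i _
      rw [hv i j]; ring
    rw [e, ← hrfix j, div_self (hr j).ne']
  have hvoldsum : ∀ j, ∑ i, vold i j = 1 := by
    intro j
    have e : ∑ i, vold i j
        = (∑ i, pold i * Real.exp (-ζ * d i j) * rold j /
            (∑ k, Real.exp (-ζ * d i k) * rold k)) / rold j := by
      rw [Finset.sum_div]
      apply Finset.sum_congr rfl; intro i _
      rw [hvold i j]; ring
    rw [e, ← hroldfix j, div_self (hrold j).ne']
  have hT0 : 0 ≤ ∑ j, r j * ∑ i, v i j * Real.log (v i j / vold i j) := by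
    apply Finset.sum_nonneg
    intro j _
    apply mul_nonneg (hr j).le
    exact gibbs_aux Finset.univ (fun i => v i j) (fun i => vold i j)
      (fun i _ => hvpos i j) (fun i _ => hvoldpos i j) (by rw [hvsum j, hvoldsum j])
  refine ⟨part1, ?_, pinsker_aux p p' hp hp'pos hp1 hp'1⟩
  rw [part1]
  nlinarith [mul_nonneg hlam hD0, mul_nonneg hlam hT0]
end
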